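/- Let X be a nonempty set. There is no uniformly complete bounded archimedean ℓ-algebra F together with a function f : X → F such that for every uniformly complete bounded archimedean ℓ-algebra A and every function g : X → A there exists a unique bal-morphism α : F → A with α ∘ f = g. Consequently, the forgetful functor from uniformly complete bounded archimedean ℓ-algebras to sets has no left adjoint. -/

import Mathlib

/-- An ℓ-algebra: a commutative unital ℝ-algebra with a lattice order such that
addition is translation-invariant, products of nonnegatives are nonnegative, and
scalar multiplication by nonnegative reals preserves nonnegativity. -/
class LAlg (A : Type*) extends CommRing A, Lattice A, Algebra ℝ A where
  add_le_add_right' : ∀ a b : A, a ≤ b → ∀ c : A, a + c ≤ b + c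
  mul_nonneg' : ∀ a b : A, 0 ≤ a → 0 ≤ b → 0 ≤ a * b
  smul_nonneg' : ∀ (r : ℝ) (a : A), 0 ≤ r → 0 ≤ a → 0 ≤ r • a

/-- `A` is bounded: `1` is a strong order unit. -/
def LAlg.IsBounded (A : Type*) [LAlg A] : Prop := ∀ a : A, ∃ n : ℕ, a ≤ n • (1 : A)

/-- `A` is archimedean. -/
def LAlg.IsArch (A : Type*) [LAlg A] : Prop := ∀ a b : A, (∀ n : ℕ, n • a ≤ b) → a ≤ 0

/-- The norm ‖a‖ = inf {r : ℝ | |a| ≤ r·1}, where |a| = a ⊔ -a. -/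
noncomputable def lnorm {A : Type*} [LAlg A] (a : A) : ℝ := sInf {r : ℝ | a ⊔ -a ≤ r • (1 : A)}

/-- A bal-morphism: a unital ℝ-algebra homomorphism preserving binary joins. -/
def IsBalHom {A B : Type*} [LAlg A] [LAlg B] (α : A →ₐ[ℝ] B) : Prop :=
  ∀ a b : A, α (a ⊔ b) = α a ⊔ α b


/-- Uniform completeness: completeness in the metric induced by the norm `lnorm`. -/
def UnifComplete (B : Type*) [LAlg B] : Prop :=
  ∀ u : ℕ → B, (∀ ε : ℝ, 0 < ε → ∃ N : ℕ, ∀ m ≥ N, ∀ n ≥ N, lnorm (u m - u n) ≤ ε) →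
    ∃ b : B, ∀ ε : ℝ, 0 < ε → ∃ N : ℕ, ∀ n ≥ N, lnorm (u n - b) ≤ ε

/-! If `F` were free on `X` via `f`, pick `x₀ : X`. Since `F` is bounded,
`f x₀ ≤ n • 1` for some `n`, and bal-morphisms are monotone, so every bal-morphism
`α : F → ℝ` satisfies `α (f x₀) ≤ n`. Hence no `α` can extend the constant map `X → ℝ`
with value `n + 1`, although `ℝ` is a uniformly complete bounded archimedean ℓ-algebra. -/

noncomputable instance : LAlg ℝ :=
  { (inferInstance : CommRing ℝ), (inferInstance : Lattice ℝ),
    (inferInstance : Algebra ℝ ℝ) with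
    add_le_add_right' := fun _ _ h c => add_le_add_left h c
    mul_nonneg' := fun _ _ ha hb => mul_nonneg ha hb
    smul_nonneg' := fun _ _ hr ha => smul_nonneg hr ha }

namespace LAlg

theorem isBounded_real : IsBounded ℝ := fun a ↦ by
  obtain ⟨n, hn⟩ := exists_nat_ge a
  exact ⟨n, by simpa using hn⟩

theorem isArch_real : IsArch ℝ := fun a b hab ↦ by
  by_contra! ha
  obtain ⟨n, hn⟩ := Archimedean.arch b ha
  have := hab (n + 1)
  rw [succ_nsmul] at this
  linarith

end LAlg

theorem lnorm_real (a : ℝ) : lnorm a = |a| := by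
  have : {r : ℝ | a ⊔ -a ≤ r • (1 : ℝ)} = Set.Ici |a| := by
    ext r
    simp [abs]
  rw [lnorm, this, csInf_Ici]

theorem unifComplete_real : UnifComplete ℝ := by
  intro u hu
  have hcauchy : CauchySeq u := Metric.cauchySeq_iff.mpr fun ε hε ↦ by
    obtain ⟨N, hN⟩ := hu (ε / 2) (half_pos hε)
    refine ⟨N, fun m hm n hn ↦ ?_⟩
    have := hN m hm n hn
    rw [lnorm_real] at this
    rw [Real.dist_eq]
    linarith
  obtain ⟨b, hb⟩ := cauchySeq_tendsto_of_complete hcauchy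
  refine ⟨b, fun ε hε ↦ ?_⟩
  obtain ⟨N, hN⟩ := Metric.tendsto_atTop.mp hb ε hε
  exact ⟨N, fun n hn ↦ by rw [lnorm_real, ← Real.dist_eq]; exact (hN n hn).le⟩

theorem IsBalHom.monotone {A B : Type*} [LAlg A] [LAlg B] {α : A →ₐ[ℝ] B}
    (hα : IsBalHom α) : Monotone α := fun a b hab ↦ by
  have := hα a b
  rw [sup_eq_right.mpr hab] at this
  exact le_of_sup_eq this.symm

theorem IsBalHom.le_nsmul_one {A B : Type*} [LAlg A] [LAlg B] {α : A →ₐ[ℝ] B}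
    (hα : IsBalHom α) {a : A} {n : ℕ} (ha : a ≤ n • (1 : A)) : α a ≤ n • (1 : B) := by
  simpa using hα.monotone ha

theorem stmt13_general (X : Type) [Nonempty X] (F : Type) [LAlg F]
    (hFb : LAlg.IsBounded F) (f : X → F)
    (h : ∀ (A : Type) [LAlg A], LAlg.IsBounded A → LAlg.IsArch A → UnifComplete A →
      ∀ g : X → A, ∃! α : F →ₐ[ℝ] A, IsBalHom α ∧ α ∘ f = g) :
    False := by
  obtain ⟨x₀⟩ := ‹Nonempty X›
  obtain ⟨n, hn⟩ := hFb (f x₀)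
  obtain ⟨α, ⟨hbal, hcomp⟩, -⟩ := h ℝ LAlg.isBounded_real LAlg.isArch_real unifComplete_real
    (fun _ ↦ (n : ℝ) + 1)
  have hbound : α (f x₀) ≤ n := by simpa using hbal.le_nsmul_one hn
  have hvalue : α (f x₀) = n + 1 := congrFun hcomp x₀
  linarith

/-- there is no free uniformly complete bounded archimedean ℓ-algebra
on a nonempty set; the forgetful functor ubal → Set has no left adjoint. -/
theorem stmt13 (X : Type) [Nonempty X] (F : Type) [LAlg F]
    (hFb : LAlg.IsBounded F) (hFa : LAlg.IsArch F) (hFc : UnifComplete F) (f : X → F)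
    (h : ∀ (A : Type) [LAlg A], LAlg.IsBounded A → LAlg.IsArch A → UnifComplete A →
      ∀ g : X → A, ∃! α : F →ₐ[ℝ] A, IsBalHom α ∧ α ∘ f = g) :
    False :=
  stmt13_general X F hFb f h
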